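/- arXiv:1207.5815 — 2 statements merged into one kernel-verified Lean document; each statement's English description precedes it below -/
import Mathlib

section
/- Let n ≥ 1, let (X_i, d_i) for i = 1,…,n be nonempty complete metric spaces, and equip X = Π_{i=1}^n X_i with the sup metric. Let G : X → X satisfy d(G(x)_j, G(y)_j) ≤ Σ_{i=1}^n Λ_{ij}·d(x_i, y_i) for all x, y ∈ X and all j, where Λ is a nonnegative n×n real matrix with ρ(Λᵀ) < 1. Let T ≥ 1 and let τ_{ij} ∈ {0, 1, …, T−1} for all i, j (these delays realize a non-distributed time-delayed interaction). Then there exists x̃ ∈ X with G(x̃) = x̃ such that: (a) x̃ is a globally attracting fixed point of G, and (b) every sequence u : ℕ → X satisfying u(k+T)_j = G_j((u(k+T−1−τ_{ij})_i)_{i=1,…,n}) for all k ≥ 0 and all j converges to x̃ in the sup metric. -/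
/-!
Since `Λᵀ` is entrywise nonnegative with spectral radius `< 1`, Gelfand's formula yields a weight
vector `w ≥ 1` and `c < 1` with `Λᵀ w ≤ c w`. In the weighted sup distance
`max_j d(x_j, y_j) / w_j` the map `G` is then a `c`-contraction, which gives the globally
attracting fixed point `p`. Along a delayed orbit, the weighted distance to `p` at time `k + T` is
at most `c` times its maximum over the window `k, …, k + T - 1`, so it decays like `c ^ (k / T)`.
-/

open Filter Topology Finset Function
open scoped Matrix

/-- The spectral radius of a real square matrix: the supremum of the absolute values
of its complex eigenvalues. -/
noncomputable def specRad {n : ℕ} (A : Matrix (Fin n) (Fin n) ℝ) : ℝ :=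
  sSup ((fun μ : ℂ => ‖μ‖) '' spectrum ℂ (A.map (fun x => (x : ℂ))))

theorem spectrum.exists_pow_norm_lt_pow_of_spectralRadius_lt {A : Type*} [NormedRing A]
    [NormedAlgebra ℂ A] [CompleteSpace A] (a : A) {r : ℝ}
    (hr : spectralRadius ℂ a < ENNReal.ofReal r) : ∃ m ≠ 0, ‖a ^ m‖ < r ^ m := by
  obtain ⟨m, hm, hm0⟩ := ((pow_norm_pow_one_div_tendsto_nhds_spectralRadius a).eventually_lt_const
    hr |>.and (eventually_ne_atTop 0)).exists
  refine ⟨m, hm0, ?_⟩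
  rw [ENNReal.ofReal_lt_ofReal_iff', one_div] at hm
  calc ‖a ^ m‖ = (‖a ^ m‖ ^ ((m : ℝ)⁻¹)) ^ m :=
        (Real.rpow_inv_natCast_pow (norm_nonneg _) hm0).symm
    _ < r ^ m := pow_lt_pow_left₀ hm.1 (by positivity) hm0

namespace Matrix

section Weight

variable {ι : Type*} [Fintype ι] [DecidableEq ι]

theorem exists_weight_mulVec_le {B : Matrix ι ι ℝ} (hB : ∀ i j, 0 ≤ B i j) {t : ℝ} {m : ℕ}
    (ht : 0 < t) (hm : m ≠ 0) (h : ∀ i, (B ^ m *ᵥ 1) i ≤ t ^ m) :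
    ∃ w : ι → ℝ, (∀ i, 1 ≤ w i) ∧ ∀ i, (B *ᵥ w) i ≤ t * w i := by
  obtain ⟨m, rfl⟩ := Nat.exists_eq_succ_of_ne_zero hm
  set v : ℕ → ι → ℝ := fun k => B ^ k *ᵥ 1 with hv
  have hv_nonneg : ∀ k i, 0 ≤ v k i := fun k i =>
    sum_nonneg fun j _ => mul_nonneg (pow_apply_nonneg hB k i j) zero_le_one
  have hv_succ : ∀ k, B *ᵥ v k = v (k + 1) := fun k => by
    simp only [hv, pow_succ', mulVec_mulVec]
  -- `w = ∑_{k ≤ m} t⁻ᵏ Bᵏ 1`: applying `B` shifts the sum, and the new last term is at most `t`.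
  refine ⟨∑ k ∈ range (m + 1), t⁻¹ ^ k • v k, fun i => ?_, fun i => ?_⟩
  · calc (1 : ℝ) = (t⁻¹ ^ 0 • v 0) i := by simp [hv]
      _ ≤ _ := by
        rw [Finset.sum_apply]
        exact single_le_sum (fun k _ => mul_nonneg (by positivity) (hv_nonneg k i))
          (mem_range.2 m.succ_pos)
  · have hlast : t⁻¹ ^ m * v (m + 1) i ≤ t :=
      calc t⁻¹ ^ m * v (m + 1) i ≤ t⁻¹ ^ m * t ^ (m + 1) := by gcongr; exact h i
        _ = t := by rw [pow_succ, ← mul_assoc, inv_pow, inv_mul_cancel₀ (by positivity), one_mul]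
    have hv0 : v 0 i = 1 := by simp [hv]
    have hshift : ∀ k, t * (t⁻¹ ^ (k + 1) * v (k + 1) i) = t⁻¹ ^ k * v (k + 1) i := fun k => by
      rw [pow_succ]; field_simp
    simp only [mulVec_sum, mulVec_smul, hv_succ, Finset.sum_apply, Pi.smul_apply, smul_eq_mul]
    rw [sum_range_succ, sum_range_succ', mul_add, mul_sum]
    simp only [hshift, hv0, pow_zero, mul_one]
    linarith

attribute [local instance] Matrix.linftyOpNormedRing Matrix.linftyOpNormedAlgebra

theorem linfty_opNorm_map_ofReal (A : Matrix ι ι ℝ) : ‖A.map ((↑) : ℝ → ℂ)‖ = ‖A‖ := by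
  simp [linfty_opNorm_def]

theorem mulVec_one_apply_le_linfty_opNorm (A : Matrix ι ι ℝ) (i : ι) : (A *ᵥ 1) i ≤ ‖A‖ :=
  calc (A *ᵥ 1) i ≤ ‖A *ᵥ 1‖ := (le_abs_self _).trans (norm_le_pi_norm (A *ᵥ 1) i)
    _ ≤ ‖A‖ * ‖(1 : ι → ℝ)‖ := linfty_opNorm_mulVec A 1
    _ ≤ ‖A‖ := mul_le_of_le_one_right (norm_nonneg _)
      ((pi_norm_le_iff_of_nonneg zero_le_one).2 fun _ => by simp)

theorem exists_pow_mulVec_one_le_of_spectralRadius_lt_one (B : Matrix ι ι ℝ)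
    (hB : spectralRadius ℂ (B.map ((↑) : ℝ → ℂ)) < 1) :
    ∃ t m, 0 < t ∧ t < 1 ∧ m ≠ 0 ∧ ∀ i, (B ^ m *ᵥ 1) i ≤ t ^ m := by
  have : CompleteSpace (Matrix ι ι ℂ) := FiniteDimensional.complete ℂ _
  obtain ⟨t, ht0, hρt, ht1⟩ := ENNReal.lt_iff_exists_real_btwn.1 hB
  obtain ⟨m, hm, hnorm⟩ := spectrum.exists_pow_norm_lt_pow_of_spectralRadius_lt _ hρt
  have htm : 0 < t ^ m := (norm_nonneg _).trans_lt hnorm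
  refine ⟨t, m, ht0.lt_of_ne (by rintro rfl; simp [hm] at htm), ENNReal.ofReal_lt_one.1 ht1, hm,
    fun i => ?_⟩
  calc (B ^ m *ᵥ 1) i ≤ ‖B ^ m‖ := (B ^ m).mulVec_one_apply_le_linfty_opNorm i
    _ = ‖B.map ((↑) : ℝ → ℂ) ^ m‖ := by
      rw [← linfty_opNorm_map_ofReal]
      exact congrArg norm (map_pow Complex.ofRealHom.mapMatrix B m)
    _ ≤ t ^ m := hnorm.le

theorem spectralRadius_le_ofReal_specRad {n : ℕ} (A : Matrix (Fin n) (Fin n) ℝ) :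
    spectralRadius ℂ (A.map ((↑) : ℝ → ℂ)) ≤ ENNReal.ofReal (specRad A) := by
  have : CompleteSpace (Matrix (Fin n) (Fin n) ℂ) := FiniteDimensional.complete ℂ _
  have hbdd : BddAbove ((fun μ : ℂ => ‖μ‖) '' spectrum ℂ (A.map ((↑) : ℝ → ℂ))) :=
    ((spectrum.isCompact _).image continuous_norm).bddAbove
  exact iSup₂_le fun μ hμ =>
    (ofReal_norm μ).symm.le.trans (ENNReal.ofReal_le_ofReal (le_csSup hbdd ⟨μ, hμ, rfl⟩))

theorem exists_weight_of_specRad_lt_one {n : ℕ} {B : Matrix (Fin n) (Fin n) ℝ}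
    (hB : ∀ i j, 0 ≤ B i j) (hρ : specRad B < 1) :
    ∃ (w : Fin n → ℝ) (c : ℝ), (∀ i, 1 ≤ w i) ∧ 0 ≤ c ∧ c < 1 ∧ ∀ i, (B *ᵥ w) i ≤ c * w i := by
  obtain ⟨t, m, ht0, ht1, hm, hpow⟩ := B.exists_pow_mulVec_one_le_of_spectralRadius_lt_one
    ((spectralRadius_le_ofReal_specRad B).trans_lt (ENNReal.ofReal_lt_one.2 hρ))
  obtain ⟨w, hw1, hw⟩ := exists_weight_mulVec_le hB ht0 hm hpow
  exact ⟨w, t, hw1, ht0.le, ht1, hw⟩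

end Weight

end Matrix

theorem exists_isFixedPt_tendsto_iterate_of_dist_iterate_le {α : Type*} [MetricSpace α]
    [Nonempty α] [CompleteSpace α] {f : α → α} {C c : ℝ} (hc0 : 0 ≤ c) (hc1 : c < 1)
    (hf : ∀ k x y, dist (f^[k] x) (f^[k] y) ≤ C * c ^ k * dist x y) :
    ∃ p, IsFixedPt f p ∧ ∀ x, Tendsto (fun k => f^[k] x) atTop (𝓝 p) := by
  have hCc : Tendsto (fun k => C * c ^ k) atTop (𝓝 0) := by
    simpa using (tendsto_pow_atTop_nhds_zero_of_lt_one hc0 hc1).const_mul C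
  obtain ⟨N, hN⟩ := (hCc.eventually_lt_const one_pos).exists
  have hcontr : ContractingWith (C * c ^ N).toNNReal f^[N] :=
    ⟨Real.toNNReal_lt_one.2 hN, LipschitzWith.of_dist_le_mul fun x y =>
      (hf N x y).trans (by gcongr; exact Real.le_coe_toNNReal _)⟩
  set p := hcontr.fixedPoint f^[N]
  refine ⟨p, hcontr.isFixedPt_fixedPoint_iterate, fun x => ?_⟩
  rw [tendsto_iff_dist_tendsto_zero]
  refine squeeze_zero (fun _ => dist_nonneg) (fun k => ?_)
    (by simpa using hCc.mul_const (dist x p))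
  calc dist (f^[k] x) p = dist (f^[k] x) (f^[k] p) := by
        rw [iterate_fixed hcontr.isFixedPt_fixedPoint_iterate]
    _ ≤ C * c ^ k * dist x p := hf k x p

theorem tendsto_zero_of_le_mul_of_forall_window_le {a : ℕ → ℝ} {c : ℝ} {T : ℕ}
    (ha : ∀ t, 0 ≤ a t) (hc0 : 0 ≤ c) (hc1 : c < 1) (hT : 0 < T)
    (h : ∀ k M, (∀ s < T, a (k + s) ≤ M) → a (k + T) ≤ c * M) :
    Tendsto a atTop (𝓝 0) := by
  set M₀ := ∑ s ∈ range T, a s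
  have hM₀ : 0 ≤ M₀ := sum_nonneg fun s _ => ha s
  have hbound : ∀ t, a t ≤ c ^ (t / T) * M₀ := by
    intro t
    induction t using Nat.strong_induction_on with
    | _ t ih =>
      rcases lt_or_ge t T with ht | ht
      · rw [Nat.div_eq_of_lt ht, pow_zero, one_mul]
        exact single_le_sum (fun s _ => ha s) (mem_range.2 ht)
      · obtain ⟨k, rfl⟩ := Nat.exists_eq_add_of_le' ht
        refine (h k (c ^ (k / T) * M₀) fun s hs => (ih _ (by omega)).trans ?_).trans_eq ?_
        · exact mul_le_mul_of_nonneg_right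
            (pow_le_pow_of_le_one hc0 hc1.le (Nat.div_le_div_right (Nat.le_add_right k s))) hM₀
        · rw [Nat.add_div_right _ hT, pow_succ]; ring
  refine squeeze_zero ha hbound ?_
  simpa using ((tendsto_pow_atTop_nhds_zero_of_lt_one hc0 hc1).comp
    (Nat.tendsto_div_const_atTop hT.ne')).mul_const M₀

section WeightedSupDist

variable {ι : Type*} {X : ι → Type*} [∀ i, PseudoMetricSpace (X i)] {w : ι → ℝ}

noncomputable def weightedSupDist (w : ι → ℝ) (x y : ∀ i, X i) : ℝ :=
  ⨆ i, dist (x i) (y i) / w i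

theorem weightedSupDist_nonneg (hw : ∀ i, 0 ≤ w i) (x y : ∀ i, X i) :
    0 ≤ weightedSupDist w x y :=
  Real.iSup_nonneg fun i => div_nonneg dist_nonneg (hw i)

theorem weightedSupDist_le (hw : ∀ i, 0 < w i) {x y : ∀ i, X i} {r : ℝ} (hr : 0 ≤ r)
    (h : ∀ i, dist (x i) (y i) ≤ w i * r) : weightedSupDist w x y ≤ r :=
  Real.iSup_le (fun i => (div_le_iff₀' (hw i)).2 (h i)) hr

variable [Fintype ι]

theorem dist_le_mul_weightedSupDist (hw : ∀ i, 0 < w i) (x y : ∀ i, X i) (i : ι) :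
    dist (x i) (y i) ≤ w i * weightedSupDist w x y :=
  (div_le_iff₀' (hw i)).1 (le_ciSup (f := fun i => dist (x i) (y i) / w i)
    (Finite.bddAbove_range _) i)

theorem weightedSupDist_le_dist (hw : ∀ i, 1 ≤ w i) (x y : ∀ i, X i) :
    weightedSupDist w x y ≤ dist x y :=
  weightedSupDist_le (fun i => one_pos.trans_le (hw i)) dist_nonneg fun i =>
    (dist_le_pi_dist x y i).trans (le_mul_of_one_le_left dist_nonneg (hw i))

theorem dist_le_sum_mul_weightedSupDist (hw : ∀ i, 0 < w i) (x y : ∀ i, X i) :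
    dist x y ≤ (∑ i, w i) * weightedSupDist w x y := by
  have hψ := weightedSupDist_nonneg (fun i => (hw i).le) x y
  refine (dist_pi_le_iff (mul_nonneg (sum_nonneg fun i _ => (hw i).le) hψ)).2 fun i =>
    (dist_le_mul_weightedSupDist hw x y i).trans ?_
  gcongr
  exact single_le_sum (fun j _ => (hw j).le) (mem_univ i)

variable {G : (∀ i, X i) → ∀ i, X i} {Λ : Matrix ι ι ℝ} {c : ℝ}
  (hΛ : ∀ i j, 0 ≤ Λ i j)
  (hG : ∀ x y : ∀ i, X i, ∀ j, dist (G x j) (G y j) ≤ ∑ i, Λ i j * dist (x i) (y i))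
  (hw : ∀ j, (Λᵀ *ᵥ w) j ≤ c * w j)
include hΛ hG hw

theorem dist_apply_le_of_forall_dist_le_mul {x y : ∀ i, X i} {r : ℝ} (hr : 0 ≤ r)
    (h : ∀ i, dist (x i) (y i) ≤ w i * r) (j : ι) : dist (G x j) (G y j) ≤ w j * (c * r) :=
  calc dist (G x j) (G y j) ≤ ∑ i, Λ i j * dist (x i) (y i) := hG x y j
    _ ≤ ∑ i, Λ i j * (w i * r) := by gcongr with i; exacts [hΛ i j, h i]
    _ = (Λᵀ *ᵥ w) j * r := by simp [Matrix.mulVec, dotProduct, sum_mul, mul_assoc]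
    _ ≤ c * w j * r := by gcongr; exact hw j
    _ = w j * (c * r) := by ring

theorem weightedSupDist_iterate_le (hw0 : ∀ i, 0 < w i) (hc : 0 ≤ c) (k : ℕ) (x y : ∀ i, X i) :
    weightedSupDist w (G^[k] x) (G^[k] y) ≤ c ^ k * weightedSupDist w x y := by
  induction k with
  | zero => simp
  | succ k ih =>
    have hr : 0 ≤ c ^ k * weightedSupDist w x y :=
      mul_nonneg (pow_nonneg hc k) (weightedSupDist_nonneg (fun i => (hw0 i).le) x y)
    rw [iterate_succ_apply', iterate_succ_apply', pow_succ', mul_assoc]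
    exact weightedSupDist_le hw0 (mul_nonneg hc hr) <|
      dist_apply_le_of_forall_dist_le_mul hΛ hG hw hr fun i =>
        (dist_le_mul_weightedSupDist hw0 _ _ i).trans (mul_le_mul_of_nonneg_left ih (hw0 i).le)

theorem dist_iterate_le (hw1 : ∀ i, 1 ≤ w i) (hc : 0 ≤ c) (k : ℕ) (x y : ∀ i, X i) :
    dist (G^[k] x) (G^[k] y) ≤ (∑ i, w i) * c ^ k * dist x y := by
  have hw0 : ∀ i, 0 < w i := fun i => one_pos.trans_le (hw1 i)
  calc dist (G^[k] x) (G^[k] y) ≤ (∑ i, w i) * weightedSupDist w (G^[k] x) (G^[k] y) :=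
        dist_le_sum_mul_weightedSupDist hw0 _ _
    _ ≤ (∑ i, w i) * (c ^ k * dist x y) := by
        gcongr
        · exact sum_nonneg fun i _ => (hw0 i).le
        · exact (weightedSupDist_iterate_le hΛ hG hw hw0 hc k x y).trans
            (mul_le_mul_of_nonneg_left (weightedSupDist_le_dist hw1 x y) (pow_nonneg hc k))
    _ = (∑ i, w i) * c ^ k * dist x y := by ring

theorem tendsto_of_delayed_recursion (hw0 : ∀ i, 0 < w i) (hc0 : 0 ≤ c) (hc1 : c < 1)
    {p : ∀ i, X i} (hp : G p = p) {T : ℕ} (hT : 0 < T) {τ : ι → ι → ℕ}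
    (hτ : ∀ i j, τ i j ≤ T - 1) {u : ℕ → ∀ i, X i}
    (hu : ∀ k j, u (k + T) j = G (fun i => u (k + T - 1 - τ i j) i) j) :
    Tendsto u atTop (𝓝 p) := by
  have hwin : ∀ k M, (∀ s < T, weightedSupDist w (u (k + s)) p ≤ M) →
      weightedSupDist w (u (k + T)) p ≤ c * M := by
    intro k M hM
    have hM0 : 0 ≤ M := (weightedSupDist_nonneg (fun i => (hw0 i).le) _ _).trans (hM 0 hT)
    refine weightedSupDist_le hw0 (mul_nonneg hc0 hM0) fun j => ?_
    rw [hu k j, ← hp]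
    refine dist_apply_le_of_forall_dist_le_mul hΛ hG hw hM0 (fun i => ?_) j
    have hidx : k + T - 1 - τ i j = k + (T - 1 - τ i j) := by have := hτ i j; omega
    rw [hidx]
    exact (dist_le_mul_weightedSupDist hw0 _ _ i).trans
      (mul_le_mul_of_nonneg_left (hM _ (by omega)) (hw0 i).le)
  have ha := tendsto_zero_of_le_mul_of_forall_window_le
    (fun t => weightedSupDist_nonneg (fun i => (hw0 i).le) (u t) p) hc0 hc1 hT hwin
  rw [tendsto_iff_dist_tendsto_zero]
  refine squeeze_zero (fun _ => dist_nonneg)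
    (fun t => dist_le_sum_mul_weightedSupDist hw0 (u t) p) ?_
  simpa using ha.const_mul (∑ i, w i)

end WeightedSupDist

theorem nondistributed_delays_stability_general
    {n : ℕ} (X : Fin n → Type*)
    [∀ i, MetricSpace (X i)] [∀ i, Nonempty (X i)] [∀ i, CompleteSpace (X i)]
    (G : (∀ i, X i) → (∀ i, X i))
    (Λ : Matrix (Fin n) (Fin n) ℝ) (hΛ0 : ∀ i j, 0 ≤ Λ i j)
    (hG : ∀ x y : ∀ i, X i, ∀ j, dist (G x j) (G y j) ≤ ∑ i, Λ i j * dist (x i) (y i))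
    (hρ : specRad Λ.transpose < 1)
    (T : ℕ) (hT : 1 ≤ T) (τ : Fin n → Fin n → ℕ) (hτ : ∀ i j, τ i j ≤ T - 1) :
    ∃ p : ∀ i, X i,
      G p = p ∧
      (∀ x : ∀ i, X i, Tendsto (fun k => G^[k] x) atTop (nhds p)) ∧
      (∀ u : ℕ → ∀ i, X i,
        (∀ k, ∀ j, u (k + T) j = G (fun i => u (k + T - 1 - τ i j) i) j) →
        Tendsto u atTop (nhds p)) := by
  obtain ⟨w, c, hw1, hc0, hc1, hw⟩ :=
    Matrix.exists_weight_of_specRad_lt_one (fun i j => hΛ0 j i) hρ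
  obtain ⟨p, hp, hattr⟩ := exists_isFixedPt_tendsto_iterate_of_dist_iterate_le hc0 hc1
    (dist_iterate_le hΛ0 hG hw hw1 hc0)
  exact ⟨p, hp, hattr, fun u hu => tendsto_of_delayed_recursion hΛ0 hG hw
    (fun i => one_pos.trans_le (hw1 i)) hc0 hc1 hp hT hτ hu⟩

/-- If `ρ(Λᵀ) < 1` then the network `G` has a globally attracting fixed point `p`, and
every orbit of any time-delayed version of `G` with non-distributed delays
`τ_{ij} ∈ {0,…,T−1}` converges to `p` as well. -/
theorem nondistributed_delays_stability
    {n : ℕ} (hn : 1 ≤ n) (X : Fin n → Type*)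
    [∀ i, MetricSpace (X i)] [∀ i, Nonempty (X i)] [∀ i, CompleteSpace (X i)]
    (G : (∀ i, X i) → (∀ i, X i))
    (Λ : Matrix (Fin n) (Fin n) ℝ) (hΛ0 : ∀ i j, 0 ≤ Λ i j)
    (hG : ∀ x y : ∀ i, X i, ∀ j, dist (G x j) (G y j) ≤ ∑ i, Λ i j * dist (x i) (y i))
    (hρ : specRad Λ.transpose < 1)
    (T : ℕ) (hT : 1 ≤ T) (τ : Fin n → Fin n → ℕ) (hτ : ∀ i j, τ i j ≤ T - 1) :
    ∃ p : ∀ i, X i,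
      G p = p ∧
      (∀ x : ∀ i, X i, Tendsto (fun k => G^[k] x) atTop (nhds p)) ∧
      (∀ u : ℕ → ∀ i, X i,
        (∀ k, ∀ j, u (k + T) j = G (fun i => u (k + T - 1 - τ i j) i) j) →
        Tendsto u atTop (nhds p)) :=
  nondistributed_delays_stability_general X G Λ hΛ0 hG hρ T hT τ hτ
end

section
/- Let a, b, ε, c₁, c₂ be real numbers with |1 − ε| + 2|ab| < 1. Then there exists (x̃₁, x̃₂) ∈ ℝ² with x̃₁ = (1 − ε)·x̃₁ + 2a·tanh(b·x̃₂) + c₁ and x̃₂ = (1 − ε)·x̃₂ + 2a·tanh(b·x̃₁) + c₂, such that every pair of sequences u₁, u₂ : ℕ → ℝ satisfying u₁(k+4) = (1 − ε)·u₁(k+2) + 2a·tanh(b·u₂(k)) + c₁ and u₂(k+4) = (1 − ε)·u₂(k+2) + 2a·tanh(b·u₁(k)) + c₂ for all k ≥ 0 (with arbitrary initial values u₁(0),…,u₁(3), u₂(0),…,u₂(3)) converges to (x̃₁, x̃₂), i.e. u₁(k) → x̃₁ and u₂(k) → x̃₂ as k → ∞. -/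
open Filter Topology NNReal

/-! Since `tanh` is 1-Lipschitz, the update rule is a `ρ`-Lipschitz function of the window of the
last four states (sup metric on `(ℝ × ℝ)^4`), `ρ = |1 - ε| + 2|ab| < 1`. Its restriction to
constant windows is a contraction of `ℝ × ℝ`, whose fixed point `p` is the equilibrium. The
sup-distance `W n` from `p` of the window at times `n, …, n + 3` is then nonincreasing with
`W (n + 4) ≤ ρ W n`, so `W n ≤ ρ ^ (n / 4) W 0 → 0`. -/

namespace Real

theorem hasDerivAt_tanh (x : ℝ) : HasDerivAt tanh (1 - tanh x ^ 2) x := by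
  have h := (hasDerivAt_sinh x).div (hasDerivAt_cosh x) (cosh_pos x).ne'
  rw [show sinh / cosh = tanh from funext fun y => (tanh_eq_sinh_div_cosh y).symm] at h
  refine h.congr_deriv ?_
  rw [tanh_eq_sinh_div_cosh]
  field_simp

theorem lipschitzWith_one_tanh : LipschitzWith 1 tanh :=
  lipschitzWith_of_nnnorm_deriv_le (fun x => (hasDerivAt_tanh x).differentiableAt) fun x => by
    rw [(hasDerivAt_tanh x).deriv, ← NNReal.coe_le_coe, coe_nnnorm, NNReal.coe_one,
      Real.norm_eq_abs, abs_le]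
    constructor <;> nlinarith [sq_nonneg (tanh x), tanh_sq_lt_one x]

end Real

theorem tendsto_zero_of_antitone_of_le_mul_shift {m : ℕ} {K : ℝ≥0} {W : ℕ → ℝ} (hm : m ≠ 0)
    (hK : K < 1) (hW0 : ∀ n, 0 ≤ W n) (hW : Antitone W) (hstep : ∀ n, W (n + m) ≤ K * W n) :
    Tendsto W atTop (𝓝 0) := by
  have hpow : ∀ q, W (m * q) ≤ K ^ q * W 0 := by
    intro q
    induction q with
    | zero => simp
    | succ q ih =>
      calc W (m * (q + 1)) = W (m * q + m) := by rw [mul_add_one]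
        _ ≤ K * W (m * q) := hstep _
        _ ≤ K * (K ^ q * W 0) := by gcongr
        _ = K ^ (q + 1) * W 0 := by ring
  have hlim : Tendsto (fun n => (K : ℝ) ^ (n / m) * W 0) atTop (𝓝 0) := by
    simpa using ((tendsto_pow_atTop_nhds_zero_of_lt_one K.coe_nonneg hK).comp
      (Nat.tendsto_div_const_atTop hm)).mul_const (W 0)
  exact squeeze_zero hW0 (fun n => (hW (Nat.mul_div_le n m)).trans (hpow _)) hlim

section DelayRecurrence

variable {X : Type*} [MetricSpace X] {m : ℕ} {K : ℝ≥0} {Φ : (Fin m → X) → X}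

theorem tendsto_of_delay_recurrence {u : ℕ → X} {p : X} (hm : m ≠ 0) (hK : K < 1)
    (hΦ : LipschitzWith K Φ) (hp : Φ (fun _ => p) = p)
    (hu : ∀ n, u (n + m) = Φ fun i => u (n + i)) :
    Tendsto u atTop (𝓝 p) := by
  set W : ℕ → ℝ := fun n => dist (fun i : Fin m => u (n + i)) fun _ => p
  have hW0 : ∀ n, 0 ≤ W n := fun n => dist_nonneg
  have hwindow : ∀ n i, i < m → dist (u (n + i)) p ≤ W n := fun n i hi =>
    dist_le_pi_dist (fun i : Fin m => u (n + i)) (fun _ => p) ⟨i, hi⟩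
  have hnext : ∀ n, dist (u (n + m)) p ≤ K * W n := fun n => by
    rw [hu, ← hp]
    exact hΦ.dist_le_mul _ _
  have hfuture : ∀ n k, dist (u (n + k)) p ≤ W n := by
    intro n k
    -- a later state is within `K ≤ 1` times an earlier window, bounded entrywise by induction
    induction k using Nat.strong_induction_on with
    | _ k ih =>
      rcases lt_or_ge k m with hk | hk
      · exact hwindow n k hk
      obtain ⟨j, rfl⟩ := Nat.exists_eq_add_of_le' hk
      have hj : W (n + j) ≤ W n := (dist_pi_le_iff (hW0 n)).2 fun i => by
        rw [add_assoc]
        exact ih (j + i) (by omega)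
      calc dist (u (n + (j + m))) p = dist (u (n + j + m)) p := by rw [add_assoc]
        _ ≤ K * W (n + j) := hnext _
        _ ≤ W (n + j) := mul_le_of_le_one_left (hW0 _) hK.le
        _ ≤ W n := hj
  have hW : Antitone W := antitone_nat_of_succ_le fun n =>
    (dist_pi_le_iff (hW0 n)).2 fun i => by
      simpa only [add_assoc, add_comm 1] using hfuture n (1 + i)
  have hstep : ∀ n, W (n + m) ≤ K * W n := fun n =>
    (dist_pi_le_iff (by positivity)).2 fun i =>
      calc dist (u (n + m + i)) p = dist (u (n + i + m)) p := by rw [add_right_comm]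
        _ ≤ K * W (n + i) := hnext _
        _ ≤ K * W n := by gcongr; exact hW (Nat.le_add_right _ _)
  have hlim := tendsto_zero_of_antitone_of_le_mul_shift hm hK hW0 hW hstep
  refine tendsto_iff_dist_tendsto_zero.2 (squeeze_zero (fun _ => dist_nonneg) (fun n => ?_) hlim)
  simpa using hwindow n 0 (Nat.pos_of_ne_zero hm)

theorem exists_fixedPoint_tendsto_of_delay_recurrence [Nonempty X] [CompleteSpace X]
    (hm : m ≠ 0) (hK : K < 1) (hΦ : LipschitzWith K Φ) :
    ∃ p, Φ (fun _ => p) = p ∧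
      ∀ u : ℕ → X, (∀ n, u (n + m) = Φ fun i => u (n + i)) → Tendsto u atTop (𝓝 p) := by
  have : Nonempty (Fin m) := ⟨⟨0, Nat.pos_of_ne_zero hm⟩⟩
  have hdiag : ContractingWith K fun x : X => Φ fun _ => x :=
    ⟨hK, LipschitzWith.of_dist_le_mul fun x y => by
      simpa [dist_pi_const] using hΦ.dist_le_mul (fun _ => x) fun _ => y⟩
  exact ⟨_, hdiag.fixedPoint_isFixedPt, fun u hu =>
    tendsto_of_delay_recurrence hm hK hΦ hdiag.fixedPoint_isFixedPt hu⟩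

end DelayRecurrence

theorem lipschitzWith_mul_fst_add_mul_tanh_snd (α β γ c : ℝ) :
    LipschitzWith (‖α‖₊ + ‖β‖₊ * ‖γ‖₊) fun z : ℝ × ℝ => α * z.1 + β * Real.tanh (γ * z.2) + c := by
  have h := (((lipschitzWith_smul α).comp LipschitzWith.prod_fst).add
    ((lipschitzWith_smul β).comp (Real.lipschitzWith_one_tanh.comp
      ((lipschitzWith_smul γ).comp LipschitzWith.prod_snd)))).add (LipschitzWith.const c)
  simpa using h

/-- `s i` is the state at time `k + i`; the result is the state at time `k + 4`. -/
noncomputable def delayedNetworkStep (a b ε c₁ c₂ : ℝ) (s : Fin 4 → ℝ × ℝ) : ℝ × ℝ :=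
  ((1 - ε) * (s 2).1 + 2 * a * Real.tanh (b * (s 0).2) + c₁,
    (1 - ε) * (s 2).2 + 2 * a * Real.tanh (b * (s 0).1) + c₂)

theorem lipschitzWith_delayedNetworkStep (a b ε c₁ c₂ : ℝ) :
    LipschitzWith (‖1 - ε‖₊ + 2 * ‖a * b‖₊) (delayedNetworkStep a b ε c₁ c₂) := by
  have hread₁ : LipschitzWith 1 fun s : Fin 4 → ℝ × ℝ => ((s 2).1, (s 0).2) := by
    simpa using (LipschitzWith.prod_fst.comp (LipschitzWith.eval (α := fun _ => ℝ × ℝ) 2)).prodMk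
      (LipschitzWith.prod_snd.comp (LipschitzWith.eval (α := fun _ => ℝ × ℝ) 0))
  have hread₂ : LipschitzWith 1 fun s : Fin 4 → ℝ × ℝ => ((s 2).2, (s 0).1) := by
    simpa using (LipschitzWith.prod_snd.comp (LipschitzWith.eval (α := fun _ => ℝ × ℝ) 2)).prodMk
      (LipschitzWith.prod_fst.comp (LipschitzWith.eval (α := fun _ => ℝ × ℝ) 0))
  unfold delayedNetworkStep
  simpa [nnnorm_mul, mul_assoc] using
    ((lipschitzWith_mul_fst_add_mul_tanh_snd (1 - ε) (2 * a) b c₁).comp hread₁).prodMk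
      ((lipschitzWith_mul_fst_add_mul_tanh_snd (1 - ε) (2 * a) b c₂).comp hread₂)

/-- Stability of the time-delayed two-element Cohen–Grossberg network
`x₁^{k+4} = (1−ε)x₁^{k+2} + 2a·tanh(b x₂^k) + c₁`,
`x₂^{k+4} = (1−ε)x₂^{k+2} + 2a·tanh(b x₁^k) + c₂`:
if `|1 − ε| + 2|ab| < 1` then there is a fixed point to which every orbit converges. -/
theorem delayed_two_element_network_stability
    (a b ε c₁ c₂ : ℝ) (hρ : |1 - ε| + 2 * |a * b| < 1) :
    ∃ p₁ p₂ : ℝ,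
      p₁ = (1 - ε) * p₁ + 2 * a * Real.tanh (b * p₂) + c₁ ∧
      p₂ = (1 - ε) * p₂ + 2 * a * Real.tanh (b * p₁) + c₂ ∧
      ∀ u₁ u₂ : ℕ → ℝ,
        (∀ k, u₁ (k + 4) = (1 - ε) * u₁ (k + 2) + 2 * a * Real.tanh (b * u₂ k) + c₁) →
        (∀ k, u₂ (k + 4) = (1 - ε) * u₂ (k + 2) + 2 * a * Real.tanh (b * u₁ k) + c₂) →
        Tendsto u₁ atTop (nhds p₁) ∧ Tendsto u₂ atTop (nhds p₂) := by
  have hK : ‖1 - ε‖₊ + 2 * ‖a * b‖₊ < 1 := by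
    rw [← NNReal.coe_lt_coe]
    simpa using hρ
  obtain ⟨p, hp, hconv⟩ := exists_fixedPoint_tendsto_of_delay_recurrence (by norm_num) hK
    (lipschitzWith_delayedNetworkStep a b ε c₁ c₂)
  refine ⟨p.1, p.2, (congrArg Prod.fst hp).symm, (congrArg Prod.snd hp).symm, fun u₁ u₂ h₁ h₂ => ?_⟩
  exact Prod.tendsto_iff _ _ |>.1 (hconv (fun n => (u₁ n, u₂ n)) fun n => Prod.ext (h₁ n) (h₂ n))
end
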